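/- Let A be a k-algebra, flat as a k-module, and suppose there exists R = Σᵢ aᵢ⊗bᵢ ∈ A⊗(A⊗A) with each bᵢ ∈ (A⊗A)^A (i.e. c·bᵢ = bᵢ·c for the standard A-bimodule structure on A⊗A) such that R¹R²⊗R³ = 1⊗1. Then for every A-bimodule M, the map ε_M: A⊗M^A → M, a⊗m ↦ am, is bijective, with inverse ζ_M(m) = R¹ ⊗ R²mR³. -/

import Mathlib

open TensorProduct

section Separability

variable (k A M : Type*) [CommRing k] [Ring A] [Algebra k A]
  [AddCommGroup M] [Module k M] [Module A M] [Module Aᵐᵒᵖ M]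
  [IsScalarTower k A M] [IsScalarTower k Aᵐᵒᵖ M]
  [SMulCommClass A k M] [SMulCommClass Aᵐᵒᵖ k M] [SMulCommClass A Aᵐᵒᵖ M]

/-- The left action `A →ₗ[k] M →ₗ[k] M`, `a ↦ (m ↦ a • m)`. -/
noncomputable def lAct : A →ₗ[k] M →ₗ[k] M where
  toFun a := DistribMulAction.toLinearMap k M a
  map_add' a a' := by ext m; exact add_smul a a' m
  map_smul' c a := by ext m; exact smul_assoc c a m

/-- The right action `A →ₗ[k] M →ₗ[k] M`, `a ↦ (m ↦ m • a)`, via `Aᵐᵒᵖ`. -/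
noncomputable def rAct : A →ₗ[k] M →ₗ[k] M where
  toFun a := DistribMulAction.toLinearMap k M (MulOpposite.op a)
  map_add' a a' := by ext m; exact add_smul (MulOpposite.op a) (MulOpposite.op a') m
  map_smul' c a := by ext m; exact smul_assoc c (MulOpposite.op a) m

/-- The two-sided action of `A ⊗ A` on `M`: `(p ⊗ q) · m = p m q`. -/
noncomputable def act : A ⊗[k] A →ₗ[k] M →ₗ[k] M :=
  TensorProduct.lift
    (((LinearMap.llcomp k M M M).comp (lAct k A M)).compl₂ (rAct k A M))

/-- `M^A = {m ∈ M : am = ma for all a ∈ A}`, as a `k`-submodule of `M`. -/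
noncomputable def invariants : Submodule k M where
  carrier := {m | ∀ a : A, a • m = MulOpposite.op a • m}
  add_mem' := by
    intro m m' hm hm' a
    simp only [smul_add, hm a, hm' a]
  zero_mem' := by intro a; simp
  smul_mem' := by
    intro c m hm a
    rw [smul_comm a c m, hm a, smul_comm]

/-- The counit `ε_M : A ⊗ M^A → M`, `a ⊗ m ↦ am`. -/
noncomputable def epsInv : A ⊗[k] (invariants k A M) →ₗ[k] M :=
  (TensorProduct.lift (lAct k A M)).comp
    (TensorProduct.map LinearMap.id (invariants k A M).subtype)

/-! Write `β · m` for the two-sided action of `β ∈ A ⊗ A` on `M`. As each `bᵢ` is `A`-central,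
`bᵢ · m ∈ M^A`, and `∑ aᵢ (bᵢ · m) = (∑ (aᵢ ⊗ 1) bᵢ) · m = m`, so `ε ∘ ζ = id`. Conversely, for
`n ∈ M^A` we get `bᵢ · (a n) = zᵢ n` with `zᵢ = bᵢ · a` central in `A` and `∑ aᵢ zᵢ = a`. The
separability element forces `z ⊗ 1 = 1 ⊗ z` in `A ⊗ A` for every central `z`, hence
`∑ aᵢ ⊗ zᵢ n = a ⊗ n`: `ζ ∘ ε` is the inclusion `A ⊗ M^A → A ⊗ M`, injective by flatness. -/

lemma TensorProduct.map_mulLeft_id_apply (c : A) (β : A ⊗[k] A) :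
    TensorProduct.map (LinearMap.mulLeft k c) LinearMap.id β = (c ⊗ₜ[k] 1) * β := by
  rw [← LinearMap.mulLeft_one k, ← LinearMap.mulLeft_tmul, LinearMap.mulLeft_apply]

lemma TensorProduct.map_id_mulRight_apply (c : A) (β : A ⊗[k] A) :
    TensorProduct.map LinearMap.id (LinearMap.mulRight k c) β = β * (1 ⊗ₜ[k] c) := by
  rw [← LinearMap.mulRight_one k, ← LinearMap.mulRight_tmul, LinearMap.mulRight_apply]

section Bimodule

variable {k A} {N : Type*} [AddCommGroup N] [Module k N] [Module A N] [Module Aᵐᵒᵖ N]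
  [IsScalarTower k A N] [IsScalarTower k Aᵐᵒᵖ N] [SMulCommClass A k N] [SMulCommClass Aᵐᵒᵖ k N]

lemma act_tmul (x y : A) (n : N) :
    act k A N (x ⊗ₜ[k] y) n = x • MulOpposite.op y • n := rfl

lemma act_one (n : N) : act k A N 1 n = n := by
  rw [Algebra.TensorProduct.one_def, act_tmul, MulOpposite.op_one, one_smul, one_smul]

lemma act_tmul_one_mul (c : A) (β : A ⊗[k] A) (n : N) :
    act k A N ((c ⊗ₜ[k] 1) * β) n = c • act k A N β n := by
  induction β using TensorProduct.induction_on with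
  | zero => simp
  | tmul x y => simp only [Algebra.TensorProduct.tmul_mul_tmul, one_mul, act_tmul, mul_smul]
  | add p q hp hq => simp only [mul_add, map_add, LinearMap.add_apply, hp, hq, smul_add]

lemma act_mul_one_tmul [SMulCommClass A Aᵐᵒᵖ N] (c : A) (β : A ⊗[k] A) (n : N) :
    act k A N (β * (1 ⊗ₜ[k] c)) n = MulOpposite.op c • act k A N β n := by
  induction β using TensorProduct.induction_on with
  | zero => simp
  | tmul x y =>
    simp only [Algebra.TensorProduct.tmul_mul_tmul, mul_one, act_tmul, MulOpposite.op_mul,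
      mul_smul]
    exact smul_comm _ _ _
  | add p q hp hq => simp only [add_mul, map_add, LinearMap.add_apply, hp, hq, smul_add]

lemma act_mem_invariants [SMulCommClass A Aᵐᵒᵖ N] {β : A ⊗[k] A}
    (hβ : ∀ c : A, (c ⊗ₜ[k] 1) * β = β * (1 ⊗ₜ[k] c)) (n : N) :
    act k A N β n ∈ invariants k A N := fun c => by
  rw [← act_tmul_one_mul, hβ, act_mul_one_tmul]

lemma act_smul_of_mem_invariants [SMulCommClass A Aᵐᵒᵖ N] (β : A ⊗[k] A) (a : A) {n : N}
    (hn : n ∈ invariants k A N) : act k A N β (a • n) = act k A A β a • n := by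
  induction β using TensorProduct.induction_on with
  | zero => simp
  | tmul x y =>
    rw [act_tmul, act_tmul, ← smul_comm a, ← hn y, smul_eq_mul, MulOpposite.smul_eq_mul_unop,
      MulOpposite.unop_op, mul_smul, mul_smul]
  | add p q hp hq => simp only [map_add, LinearMap.add_apply, hp, hq, add_smul]

variable {ι : Type*} {s : Finset ι} {aI : ι → A} {bI : ι → A ⊗[k] A}

lemma sum_smul_act_eq_self (hnorm : ∑ i ∈ s, (aI i ⊗ₜ[k] 1) * bI i = 1) (n : N) :
    ∑ i ∈ s, aI i • act k A N (bI i) n = n := by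
  simp_rw [← act_tmul_one_mul, ← LinearMap.sum_apply, ← map_sum, hnorm, act_one]

lemma tmul_one_eq_one_tmul_of_mem_invariants
    (hb : ∀ i ∈ s, ∀ c : A, (c ⊗ₜ[k] 1) * bI i = bI i * (1 ⊗ₜ[k] c))
    (hnorm : ∑ i ∈ s, (aI i ⊗ₜ[k] 1) * bI i = 1) {z : A} (hz : z ∈ invariants k A A) :
    z ⊗ₜ[k] (1 : A) = 1 ⊗ₜ[k] z :=
  calc z ⊗ₜ[k] (1 : A) = (z ⊗ₜ[k] 1) * ∑ i ∈ s, (aI i ⊗ₜ[k] 1) * bI i := by rw [hnorm, mul_one]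
    _ = ∑ i ∈ s, (aI i ⊗ₜ[k] 1) * ((z ⊗ₜ[k] 1) * bI i) := by
      simp_rw [Finset.mul_sum, ← mul_assoc, Algebra.TensorProduct.tmul_mul_tmul, mul_one]
      congr! 3 with i
      exact (hz (aI i)).symm
    _ = ∑ i ∈ s, (aI i ⊗ₜ[k] 1) * bI i * (1 ⊗ₜ[k] z) :=
      Finset.sum_congr rfl fun i hi => by rw [hb i hi, mul_assoc]
    _ = 1 ⊗ₜ[k] z := by rw [← Finset.sum_mul, hnorm, one_mul]

lemma sum_tmul_act_eq_tmul_one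
    (hb : ∀ i ∈ s, ∀ c : A, (c ⊗ₜ[k] 1) * bI i = bI i * (1 ⊗ₜ[k] c))
    (hnorm : ∑ i ∈ s, (aI i ⊗ₜ[k] 1) * bI i = 1) (a : A) :
    ∑ i ∈ s, aI i ⊗ₜ[k] act k A A (bI i) a = a ⊗ₜ[k] 1 :=
  calc ∑ i ∈ s, aI i ⊗ₜ[k] act k A A (bI i) a
      = ∑ i ∈ s, (aI i ⊗ₜ[k] 1) * (1 ⊗ₜ[k] act k A A (bI i) a) := by
        simp only [Algebra.TensorProduct.tmul_mul_tmul, mul_one, one_mul]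
    _ = ∑ i ∈ s, (aI i ⊗ₜ[k] 1) * (act k A A (bI i) a ⊗ₜ[k] 1) :=
      Finset.sum_congr rfl fun i hi => by
        rw [tmul_one_eq_one_tmul_of_mem_invariants hb hnorm (act_mem_invariants (hb i hi) a)]
    _ = (∑ i ∈ s, aI i • act k A A (bI i) a) ⊗ₜ[k] 1 := by
        simp only [Algebra.TensorProduct.tmul_mul_tmul, mul_one, smul_eq_mul, sum_tmul]
    _ = a ⊗ₜ[k] 1 := by rw [sum_smul_act_eq_self hnorm]

lemma sum_tmul_act_epsInv [SMulCommClass A Aᵐᵒᵖ N]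
    (hb : ∀ i ∈ s, ∀ c : A, (c ⊗ₜ[k] 1) * bI i = bI i * (1 ⊗ₜ[k] c))
    (hnorm : ∑ i ∈ s, (aI i ⊗ₜ[k] 1) * bI i = 1) (X : A ⊗[k] invariants k A N) :
    ∑ i ∈ s, aI i ⊗ₜ[k] act k A N (bI i) (epsInv k A N X)
      = TensorProduct.map LinearMap.id (invariants k A N).subtype X := by
  induction X using TensorProduct.induction_on with
  | zero => simp
  | tmul a n =>
    calc ∑ i ∈ s, aI i ⊗ₜ[k] act k A N (bI i) (a • (n : N))
        = TensorProduct.map LinearMap.id ((lAct k A N).flip n)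
            (∑ i ∈ s, aI i ⊗ₜ[k] act k A A (bI i) a) := by
          simp only [act_smul_of_mem_invariants _ a n.2, map_sum, map_tmul]
          rfl
      _ = a ⊗ₜ[k] (n : N) := by
          rw [sum_tmul_act_eq_tmul_one hb hnorm, map_tmul]
          exact congrArg _ (one_smul A (n : N))
  | add X Y hX hY => simp only [map_add, tmul_add, Finset.sum_add_distrib, hX, hY]

lemma epsInv_surjective [SMulCommClass A Aᵐᵒᵖ N]
    (hb : ∀ i ∈ s, ∀ c : A, (c ⊗ₜ[k] 1) * bI i = bI i * (1 ⊗ₜ[k] c))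
    (hnorm : ∑ i ∈ s, (aI i ⊗ₜ[k] 1) * bI i = 1) :
    Function.Surjective (epsInv k A N) := fun n => by
  rw [← LinearMap.mem_range, ← sum_smul_act_eq_self hnorm n]
  exact Submodule.sum_mem _ fun i hi => ⟨aI i ⊗ₜ ⟨_, act_mem_invariants (hb i hi) n⟩, rfl⟩

lemma epsInv_injective [Module.Flat k A] [SMulCommClass A Aᵐᵒᵖ N]
    (hb : ∀ i ∈ s, ∀ c : A, (c ⊗ₜ[k] 1) * bI i = bI i * (1 ⊗ₜ[k] c))
    (hnorm : ∑ i ∈ s, (aI i ⊗ₜ[k] 1) * bI i = 1) :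
    Function.Injective (epsInv k A N) := fun X Y h => by
  have hXY : TensorProduct.map LinearMap.id (invariants k A N).subtype X
      = TensorProduct.map LinearMap.id (invariants k A N).subtype Y := by
    rw [← sum_tmul_act_epsInv hb hnorm X, h, sum_tmul_act_epsInv hb hnorm Y]
  exact Module.Flat.lTensor_preserves_injective_linearMap _ (Submodule.injective_subtype _) hXY

end Bimodule

/-- Let `A` be a flat `k`-algebra and suppose there exists
`R = ∑ᵢ aᵢ ⊗ bᵢ ∈ A ⊗ (A ⊗ A)` with each `bᵢ ∈ (A ⊗ A)^A` (for the standard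
`A`-bimodule structure `a(x⊗y)a' = ax ⊗ ya'` on `A ⊗ A`) such that `R¹R² ⊗ R³ = 1 ⊗ 1`.
Then for an `A`-bimodule `M` the map `ε_M : A ⊗ M^A → M`, `a ⊗ m ↦ am`, is bijective,
with inverse `ζ_M(m) = R¹ ⊗ R²mR³` (composing with the inclusion `A ⊗ M^A ⊆ A ⊗ M`). -/
theorem counit_bijective_of_separability_element [Module.Flat k A]
    (ι : Type*) (s : Finset ι) (aI : ι → A) (bI : ι → A ⊗[k] A)
    (hb : ∀ i ∈ s, ∀ c : A,
      TensorProduct.map (LinearMap.mulLeft k c) LinearMap.id (bI i)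
        = TensorProduct.map LinearMap.id (LinearMap.mulRight k c) (bI i))
    (hnorm : ∑ i ∈ s,
        TensorProduct.map (LinearMap.mulLeft k (aI i)) LinearMap.id (bI i)
      = (1 : A) ⊗ₜ[k] (1 : A)) :
    Function.Bijective (epsInv k A M) ∧
    (∀ m : M,
      TensorProduct.lift (lAct k A M)
        (∑ i ∈ s, aI i ⊗ₜ[k] act k A M (bI i) m) = m) ∧
    (∀ X : A ⊗[k] (invariants k A M),
      ∑ i ∈ s, aI i ⊗ₜ[k] act k A M (bI i) (epsInv k A M X)
        = TensorProduct.map LinearMap.id (invariants k A M).subtype X) := by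
  simp only [TensorProduct.map_mulLeft_id_apply, TensorProduct.map_id_mulRight_apply] at hb hnorm
  rw [← Algebra.TensorProduct.one_def] at hnorm
  refine ⟨⟨epsInv_injective hb hnorm, epsInv_surjective hb hnorm⟩, fun m => ?_,
    sum_tmul_act_epsInv hb hnorm⟩
  rw [map_sum]
  exact sum_smul_act_eq_self hnorm m

end Separability
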